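/- arXiv:2110.10400 — 3 statements merged into one kernel-verified Lean document; each statement's English description precedes it below -/
import Mathlib

section
/- The modular commutator is additive under tensor products: if ρ is a positive definite density matrix on H_A ⊗ H_B ⊗ H_C and λ is a positive definite density matrix on H_{A'} ⊗ H_{B'} ⊗ H_{C'}, then for the state ρ ⊗ λ on the composite system, J(AA', BB', CC')_{ρ⊗λ} = J(A,B,C)_ρ + J(A',B',C')_λ. -/
/-!
Partial traces of `ρ ⊗ λ` are tensor products of partial traces, and for positive definite `M`, `N`
one has `log (M ⊗ N) = log M ⊗ 1 + 1 ⊗ log N`: diagonalising both factors diagonalises `M ⊗ N`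
with eigenvalues `μᵢ νⱼ`, and `log (μᵢ νⱼ) = log μᵢ + log νⱼ`. Hence every modular Hamiltonian of
`ρ ⊗ λ` is a sum `K ⊗ 1 + 1 ⊗ K'`, the cross terms of the commutator cancel, and the trace against
`ρ ⊗ λ` factorises; the normalisations `Tr ρ = Tr λ = 1` leave exactly `J_ρ + J_λ`.
-/

open scoped ComplexOrder

noncomputable section

namespace ModularCommutator

open Matrix Complex

/-- Matrix logarithm of a Hermitian matrix, defined through the spectral theorem
(junk value `0` on non-Hermitian matrices). -/
noncomputable def mlog {n : Type} [Fintype n] [DecidableEq n] (M : Matrix n n ℂ) :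
    Matrix n n ℂ :=
  if h : M.IsHermitian then
    (h.eigenvectorUnitary : Matrix n n ℂ) *
      Matrix.diagonal (fun i => (Real.log (h.eigenvalues i) : ℂ)) *
      (star (h.eigenvectorUnitary : Matrix n n ℂ))
  else 0

variable {A B C : Type} [Fintype A] [DecidableEq A] [Fintype B] [DecidableEq B]
  [Fintype C] [DecidableEq C]

/-- Partial trace onto the factors `A ⊗ B`. -/
def ptAB (ρ : Matrix (A × B × C) (A × B × C) ℂ) : Matrix (A × B) (A × B) ℂ :=
  fun p q => ∑ c : C, ρ (p.1, p.2, c) (q.1, q.2, c)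

/-- Partial trace onto the factors `B ⊗ C`. -/
def ptBC (ρ : Matrix (A × B × C) (A × B × C) ℂ) : Matrix (B × C) (B × C) ℂ :=
  fun p q => ∑ a : A, ρ (a, p.1, p.2) (a, q.1, q.2)

/-- Partial trace onto the factors `A ⊗ C`. -/
def ptAC (ρ : Matrix (A × B × C) (A × B × C) ℂ) : Matrix (A × C) (A × C) ℂ :=
  fun p q => ∑ b : B, ρ (p.1, b, p.2) (q.1, b, q.2)

/-- Partial trace onto the factor `A`. -/
def ptA (ρ : Matrix (A × B × C) (A × B × C) ℂ) : Matrix A A ℂ :=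
  fun a a' => ∑ b : B, ∑ c : C, ρ (a, b, c) (a', b, c)

/-- Partial trace onto the factor `B`. -/
def ptB (ρ : Matrix (A × B × C) (A × B × C) ℂ) : Matrix B B ℂ :=
  fun b b' => ∑ a : A, ∑ c : C, ρ (a, b, c) (a, b', c)

/-- Partial trace onto the factor `C`. -/
def ptC (ρ : Matrix (A × B × C) (A × B × C) ℂ) : Matrix C C ℂ :=
  fun c c' => ∑ a : A, ∑ b : B, ρ (a, b, c) (a, b, c')

/-- Extension of an operator on `A ⊗ B` by the identity on `C`. -/
def embAB (M : Matrix (A × B) (A × B) ℂ) : Matrix (A × B × C) (A × B × C) ℂ :=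
  fun x y => if x.2.2 = y.2.2 then M (x.1, x.2.1) (y.1, y.2.1) else 0

/-- Extension of an operator on `B ⊗ C` by the identity on `A`. -/
def embBC (M : Matrix (B × C) (B × C) ℂ) : Matrix (A × B × C) (A × B × C) ℂ :=
  fun x y => if x.1 = y.1 then M x.2 y.2 else 0

/-- Extension of an operator on `B` by the identity on `A ⊗ C`. -/
def embB (M : Matrix B B ℂ) : Matrix (A × B × C) (A × B × C) ℂ :=
  fun x y => if x.1 = y.1 ∧ x.2.2 = y.2.2 then M x.2.1 y.2.1 else 0

/-- The modular Hamiltonian `K_{AB}(ρ) = −ln ρ_{AB}`, extended by the identity on `C`. -/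
def KAB (ρ : Matrix (A × B × C) (A × B × C) ℂ) : Matrix (A × B × C) (A × B × C) ℂ :=
  embAB (-(mlog (ptAB ρ)))

/-- The modular Hamiltonian `K_{BC}(ρ) = −ln ρ_{BC}`, extended by the identity on `A`. -/
def KBC (ρ : Matrix (A × B × C) (A × B × C) ℂ) : Matrix (A × B × C) (A × B × C) ℂ :=
  embBC (-(mlog (ptBC ρ)))

/-- The modular commutator `J(A,B,C)_ρ = i · Tr(ρ [K_{AB}(ρ), K_{BC}(ρ)])`. -/
def Jmod (ρ : Matrix (A × B × C) (A × B × C) ℂ) : ℂ :=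
  Complex.I * (ρ * (KAB ρ * KBC ρ - KBC ρ * KAB ρ)).trace

variable {A' B' C' : Type} [Fintype A'] [DecidableEq A'] [Fintype B'] [DecidableEq B']
  [Fintype C'] [DecidableEq C']

/-- The tensor product `ρ ⊗ λ` of a state `ρ` on `H_A ⊗ H_B ⊗ H_C` and a state `λ`
on `H_{A'} ⊗ H_{B'} ⊗ H_{C'}`, viewed as a state on the tripartite system with
parts `AA' = H_A ⊗ H_{A'}`, `BB' = H_B ⊗ H_{B'}`, `CC' = H_C ⊗ H_{C'}`. -/
def tensorState (ρ : Matrix (A × B × C) (A × B × C) ℂ)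
    (l : Matrix (A' × B' × C') (A' × B' × C') ℂ) :
    Matrix ((A × A') × (B × B') × (C × C')) ((A × A') × (B × B') × (C × C')) ℂ :=
  fun x y =>
    ρ (x.1.1, x.2.1.1, x.2.2.1) (y.1.1, y.2.1.1, y.2.2.1) *
      l (x.1.2, x.2.1.2, x.2.2.2) (y.1.2, y.2.1.2, y.2.2.2)

end ModularCommutator

namespace ModularCommutator

open Matrix
open scoped Kronecker

section MatrixLog

open Polynomial

variable {n m : Type} [Fintype n] [Fintype m]

lemma trace_reindex {R : Type*} [AddCommMonoid R] (e : n ≃ m) (M : Matrix n n R) :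
    (reindex e e M).trace = M.trace := by
  simp only [trace, diag, reindex_apply, submatrix_apply]
  exact e.symm.sum_comp fun i => M i i

lemma nonempty_of_trace_ne_zero {R : Type*} [AddCommMonoid R] {M : Matrix n n R}
    (h : M.trace ≠ 0) : Nonempty n := by
  by_contra hn
  rw [not_nonempty_iff] at hn
  exact h (Finset.sum_of_isEmpty _)

variable [DecidableEq n] [DecidableEq m]

lemma reindex_mem_unitary {R : Type*} [Semiring R] [StarRing R] (e : n ≃ m) {U : Matrix n n R}
    (hU : U ∈ unitary (Matrix n n R)) : reindex e e U ∈ unitary (Matrix m m R) := by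
  rw [Unitary.mem_iff, star_eq_conjTranspose, conjTranspose_reindex, ← star_eq_conjTranspose]
  simp only [reindex_apply, submatrix_mul_equiv, Unitary.star_mul_self_of_mem hU,
    Unitary.mul_star_self_of_mem hU, submatrix_one_equiv, and_self]

lemma aeval_unitary_conj_diagonal (u : unitary (Matrix n n ℂ)) (δ : n → ℝ) (p : ℝ[X]) :
    aeval ((u : Matrix n n ℂ) * diagonal (fun i => (δ i : ℂ)) * star (u : Matrix n n ℂ)) p
      = u * diagonal (fun i => ((p.eval (δ i) : ℝ) : ℂ)) * star (u : Matrix n n ℂ) := by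
  rw [← Unitary.conjStarAlgAut_apply (S := ℝ), aeval_algHom_apply, Unitary.conjStarAlgAut_apply,
    ← diagonalAlgHom_apply ℝ, aeval_algHom_apply, aeval_pi_apply]
  simp only [diagonalAlgHom_apply]
  congr with i
  exact aeval_ofReal p (δ i)

/-- `mlog` does not depend on the eigenbasis chosen by `IsHermitian.eigenvectorUnitary`: both
diagonalisations compute `p(M)` for a polynomial `p` interpolating `log` at all eigenvalues. -/
lemma mlog_unitary_conj_diagonal (u : unitary (Matrix n n ℂ)) (δ : n → ℝ) :
    mlog ((u : Matrix n n ℂ) * diagonal (fun i => (δ i : ℂ)) * star (u : Matrix n n ℂ))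
      = u * diagonal (fun i => (Real.log (δ i) : ℂ)) * star (u : Matrix n n ℂ) := by
  set M := (u : Matrix n n ℂ) * diagonal (fun i => (δ i : ℂ)) * star (u : Matrix n n ℂ)
  have hM : M.IsHermitian :=
    isHermitian_mul_mul_conjTranspose _ (isHermitian_diagonal_iff.2 fun _ => Complex.conj_ofReal _)
  set s := Finset.univ.image hM.eigenvalues ∪ Finset.univ.image δ
  set p : ℝ[X] := Lagrange.interpolate s id Real.log
  have hp : ∀ x ∈ s, p.eval x = Real.log x :=
    fun x hx => Lagrange.eval_interpolate_at_node Real.log (Set.injOn_id _) hx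
  have hspec : M = hM.eigenvectorUnitary * diagonal (fun i => (hM.eigenvalues i : ℂ))
      * star (hM.eigenvectorUnitary : Matrix n n ℂ) := hM.spectral_theorem
  have hU := aeval_unitary_conj_diagonal hM.eigenvectorUnitary hM.eigenvalues p
  rw [← hspec] at hU
  rw [mlog, dif_pos hM]
  calc _ = aeval M p := by
          rw [hU]
          congr 3 with i
          exact congrArg _ (hp _ (by simp [s])).symm
    _ = _ := by
          rw [aeval_unitary_conj_diagonal u δ p]
          congr 3 with i
          exact congrArg _ (hp _ (by simp [s]))

lemma mlog_reindex (e : n ≃ m) {M : Matrix n n ℂ} (hM : M.IsHermitian) :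
    mlog (reindex e e M) = reindex e e (mlog M) := by
  set U := hM.eigenvectorUnitary
  let W : unitary (Matrix m m ℂ) := ⟨reindex e e (U : Matrix n n ℂ), reindex_mem_unitary e U.2⟩
  have hspec : M = U * diagonal (fun i => (hM.eigenvalues i : ℂ)) * star (U : Matrix n n ℂ) :=
    hM.spectral_theorem
  have hconj : ∀ D : Matrix n n ℂ, reindex e e ((U : Matrix n n ℂ) * D * star (U : Matrix n n ℂ))
      = (W : Matrix m m ℂ) * reindex e e D * star (W : Matrix m m ℂ) := by
    intro D
    simp only [W, reindex_apply, submatrix_mul_equiv, star_eq_conjTranspose,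
      conjTranspose_submatrix]
  calc mlog (reindex e e M)
      = mlog ((W : Matrix m m ℂ) * diagonal (fun i => (hM.eigenvalues (e.symm i) : ℂ))
          * star (W : Matrix m m ℂ)) := by
        conv_lhs => rw [hspec]
        rw [hconj, reindex_apply, submatrix_diagonal_equiv]
        rfl
    _ = (W : Matrix m m ℂ) * diagonal (fun i => (Real.log (hM.eigenvalues (e.symm i)) : ℂ))
          * star (W : Matrix m m ℂ) :=
        mlog_unitary_conj_diagonal W (hM.eigenvalues ∘ e.symm)
    _ = reindex e e (mlog M) := by
        rw [mlog, dif_pos hM, hconj, reindex_apply, submatrix_diagonal_equiv]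
        rfl

lemma mlog_kronecker {M : Matrix n n ℂ} {N : Matrix m m ℂ} (hM : M.PosDef) (hN : N.PosDef) :
    mlog (M ⊗ₖ N) = mlog M ⊗ₖ 1 + 1 ⊗ₖ mlog N := by
  set U := hM.1.eigenvectorUnitary
  set V := hN.1.eigenvectorUnitary
  set d := hM.1.eigenvalues
  set e := hN.1.eigenvalues
  have hspecM : M = U * diagonal (fun i => (d i : ℂ)) * star (U : Matrix n n ℂ) :=
    hM.1.spectral_theorem
  have hspecN : N = V * diagonal (fun j => (e j : ℂ)) * star (V : Matrix m m ℂ) :=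
    hN.1.spectral_theorem
  let W : unitary (Matrix (n × m) (n × m) ℂ) :=
    ⟨(U : Matrix n n ℂ) ⊗ₖ (V : Matrix m m ℂ), kronecker_mem_unitary U.2 V.2⟩
  have hstarW : star (W : Matrix (n × m) (n × m) ℂ)
      = star (U : Matrix n n ℂ) ⊗ₖ star (V : Matrix m m ℂ) := by
    simp only [W, star_eq_conjTranspose, conjTranspose_kronecker]
  have hMN : M ⊗ₖ N = (W : Matrix (n × m) (n × m) ℂ)
      * diagonal (fun x : n × m => ((d x.1 * e x.2 : ℝ) : ℂ))
      * star (W : Matrix (n × m) (n × m) ℂ) := by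
    rw [hstarW]
    conv_lhs => rw [hspecM, hspecN]
    simp only [mul_kronecker_mul, diagonal_kronecker_diagonal, Complex.ofReal_mul, W]
  have hlog : diagonal (fun x : n × m => (Real.log (d x.1 * e x.2) : ℂ))
      = diagonal (fun i => (Real.log (d i) : ℂ)) ⊗ₖ 1
        + 1 ⊗ₖ diagonal (fun j => (Real.log (e j) : ℂ)) := by
    rw [← diagonal_one, diagonal_kronecker_diagonal, ← diagonal_one, diagonal_kronecker_diagonal,
      diagonal_add]
    congr with x
    rw [Real.log_mul (hM.eigenvalues_pos x.1).ne' (hN.eigenvalues_pos x.2).ne', Complex.ofReal_add,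
      mul_one, one_mul]
  rw [hMN, mlog_unitary_conj_diagonal, hlog, hspecM, hspecN, mlog_unitary_conj_diagonal,
    mlog_unitary_conj_diagonal, hstarW, mul_add, add_mul]
  simp only [W, ← mul_kronecker_mul, mul_one, Unitary.mul_star_self_of_mem U.2,
    Unitary.mul_star_self_of_mem V.2]

end MatrixLog

section Tensor

variable {A B C A' B' C' : Type}

def tripleProdProdComm (A B C A' B' C' : Type) :
    (A × B × C) × (A' × B' × C') ≃ (A × A') × (B × B') × (C × C') :=
  (Equiv.prodProdProdComm A (B × C) A' (B' × C')).trans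
    ((Equiv.refl _).prodCongr (Equiv.prodProdProdComm B C B' C'))

lemma tensorState_eq_reindex_kronecker (M : Matrix (A × B × C) (A × B × C) ℂ)
    (N : Matrix (A' × B' × C') (A' × B' × C') ℂ) :
    tensorState M N = reindex (tripleProdProdComm A B C A' B' C')
      (tripleProdProdComm A B C A' B' C') (M ⊗ₖ N) :=
  rfl

lemma tensorState_sub_left (M M' : Matrix (A × B × C) (A × B × C) ℂ)
    (N : Matrix (A' × B' × C') (A' × B' × C') ℂ) :
    tensorState (M - M') N = tensorState M N - tensorState M' N := by
  ext x y
  simp [tensorState, sub_mul]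

lemma tensorState_sub_right (M : Matrix (A × B × C) (A × B × C) ℂ)
    (N N' : Matrix (A' × B' × C') (A' × B' × C') ℂ) :
    tensorState M (N - N') = tensorState M N - tensorState M N' := by
  ext x y
  simp [tensorState, mul_sub]

lemma embAB_add [DecidableEq C] (M N : Matrix (A × B) (A × B) ℂ) :
    (embAB (M + N) : Matrix (A × B × C) (A × B × C) ℂ) = embAB M + embAB N := by
  ext x y
  simp [embAB, ite_add_ite]

lemma embBC_add [DecidableEq A] (M N : Matrix (B × C) (B × C) ℂ) :
    (embBC (M + N) : Matrix (A × B × C) (A × B × C) ℂ) = embBC M + embBC N := by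
  ext x y
  simp [embBC, ite_add_ite]

lemma embAB_one [DecidableEq A] [DecidableEq B] [DecidableEq C] :
    (embAB 1 : Matrix (A × B × C) (A × B × C) ℂ) = 1 := by
  ext x y
  simp [embAB, one_apply, Prod.ext_iff, ← ite_and, and_comm, and_assoc]

lemma embBC_one [DecidableEq A] [DecidableEq B] [DecidableEq C] :
    (embBC 1 : Matrix (A × B × C) (A × B × C) ℂ) = 1 := by
  ext x y
  simp [embBC, one_apply, Prod.ext_iff, ← ite_and]

lemma embAB_reindex_kronecker [DecidableEq C] [DecidableEq C'] (M : Matrix (A × B) (A × B) ℂ)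
    (N : Matrix (A' × B') (A' × B') ℂ) :
    (embAB (reindex (Equiv.prodProdProdComm A B A' B') (Equiv.prodProdProdComm A B A' B')
      (M ⊗ₖ N)) : Matrix ((A × A') × (B × B') × (C × C')) _ ℂ)
      = tensorState (embAB M) (embAB N) := by
  ext x y
  simp [embAB, tensorState, Prod.ext_iff, ← ite_and, and_comm]

lemma embBC_reindex_kronecker [DecidableEq A] [DecidableEq A'] (M : Matrix (B × C) (B × C) ℂ)
    (N : Matrix (B' × C') (B' × C') ℂ) :
    (embBC (reindex (Equiv.prodProdProdComm B C B' C') (Equiv.prodProdProdComm B C B' C')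
      (M ⊗ₖ N)) : Matrix ((A × A') × (B × B') × (C × C')) _ ℂ)
      = tensorState (embBC M) (embBC N) := by
  ext x y
  simp [embBC, tensorState, Prod.ext_iff, ← ite_and, and_comm]

lemma ptAB_tensorState [Fintype C] [Fintype C'] (ρ : Matrix (A × B × C) (A × B × C) ℂ)
    (l : Matrix (A' × B' × C') (A' × B' × C') ℂ) :
    ptAB (tensorState ρ l) = reindex (Equiv.prodProdProdComm A B A' B')
      (Equiv.prodProdProdComm A B A' B') (ptAB ρ ⊗ₖ ptAB l) := by
  ext x y
  simp [ptAB, tensorState, Fintype.sum_prod_type, Finset.sum_mul_sum]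

lemma ptBC_tensorState [Fintype A] [Fintype A'] (ρ : Matrix (A × B × C) (A × B × C) ℂ)
    (l : Matrix (A' × B' × C') (A' × B' × C') ℂ) :
    ptBC (tensorState ρ l) = reindex (Equiv.prodProdProdComm B C B' C')
      (Equiv.prodProdProdComm B C B' C') (ptBC ρ ⊗ₖ ptBC l) := by
  ext x y
  simp [ptBC, tensorState, Fintype.sum_prod_type, Finset.sum_mul_sum]

lemma ptAB_posDef [Fintype A] [Fintype B] [Fintype C] [Nonempty C]
    {ρ : Matrix (A × B × C) (A × B × C) ℂ} (hρ : ρ.PosDef) : (ptAB ρ).PosDef := by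
  have hsum : ptAB ρ = ∑ c : C,
      ρ.submatrix (fun p : A × B => (p.1, p.2, c)) (fun p : A × B => (p.1, p.2, c)) := by
    ext p q
    simp [ptAB, Matrix.sum_apply]
  rw [hsum]
  exact posDef_sum Finset.univ_nonempty fun c _ =>
    hρ.submatrix fun p q h => by simpa [Prod.ext_iff] using h

lemma ptBC_posDef [Fintype A] [Fintype B] [Fintype C] [Nonempty A]
    {ρ : Matrix (A × B × C) (A × B × C) ℂ} (hρ : ρ.PosDef) : (ptBC ρ).PosDef := by
  have hsum : ptBC ρ = ∑ a : A,
      ρ.submatrix (fun p : B × C => (a, p.1, p.2)) (fun p : B × C => (a, p.1, p.2)) := by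
    ext p q
    simp [ptBC, Matrix.sum_apply]
  rw [hsum]
  exact posDef_sum Finset.univ_nonempty fun a _ =>
    hρ.submatrix fun p q h => by simpa [Prod.ext_iff] using h

variable [Fintype A] [Fintype B] [Fintype C] [Fintype A'] [Fintype B'] [Fintype C']

lemma tensorState_mul (M P : Matrix (A × B × C) (A × B × C) ℂ)
    (N Q : Matrix (A' × B' × C') (A' × B' × C') ℂ) :
    tensorState M N * tensorState P Q = tensorState (M * P) (N * Q) := by
  simp only [tensorState_eq_reindex_kronecker, reindex_apply, submatrix_mul_equiv,
    mul_kronecker_mul]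

lemma trace_tensorState (M : Matrix (A × B × C) (A × B × C) ℂ)
    (N : Matrix (A' × B' × C') (A' × B' × C') ℂ) :
    (tensorState M N).trace = M.trace * N.trace := by
  rw [tensorState_eq_reindex_kronecker, trace_reindex, trace_kronecker]

variable [DecidableEq A] [DecidableEq B] [DecidableEq C] [DecidableEq A'] [DecidableEq B']
  [DecidableEq C']

lemma commutator_tensorState_add_tensorState (P Q : Matrix (A × B × C) (A × B × C) ℂ)
    (R S : Matrix (A' × B' × C') (A' × B' × C') ℂ) :
    (tensorState P 1 + tensorState 1 R) * (tensorState Q 1 + tensorState 1 S)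
        - (tensorState Q 1 + tensorState 1 S) * (tensorState P 1 + tensorState 1 R)
      = tensorState (P * Q - Q * P) 1 + tensorState 1 (R * S - S * R) := by
  simp only [add_mul, mul_add, tensorState_mul, one_mul, mul_one, tensorState_sub_left,
    tensorState_sub_right]
  abel

lemma trace_tensorState_mul_add (ρ X : Matrix (A × B × C) (A × B × C) ℂ)
    (l Y : Matrix (A' × B' × C') (A' × B' × C') ℂ) :
    (tensorState ρ l * (tensorState X 1 + tensorState 1 Y)).trace
      = (ρ * X).trace * l.trace + ρ.trace * (l * Y).trace := by
  rw [mul_add, tensorState_mul, tensorState_mul, trace_add, trace_tensorState, trace_tensorState,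
    mul_one, mul_one]

lemma KAB_tensorState {ρ : Matrix (A × B × C) (A × B × C) ℂ}
    {l : Matrix (A' × B' × C') (A' × B' × C') ℂ} (hρ : (ptAB ρ).PosDef) (hl : (ptAB l).PosDef) :
    KAB (tensorState ρ l) = tensorState (KAB ρ) 1 + tensorState 1 (KAB l) := by
  set e := Equiv.prodProdProdComm A B A' B'
  have hneg : -reindex e e (mlog (ptAB ρ) ⊗ₖ 1 + 1 ⊗ₖ mlog (ptAB l))
      = reindex e e ((-mlog (ptAB ρ)) ⊗ₖ 1) + reindex e e (1 ⊗ₖ (-mlog (ptAB l))) := by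
    ext x y
    simp [add_comm]
  rw [KAB, ptAB_tensorState, mlog_reindex _ (hρ.kronecker hl).isHermitian, mlog_kronecker hρ hl,
    hneg, embAB_add, embAB_reindex_kronecker, embAB_reindex_kronecker, embAB_one, embAB_one,
    KAB, KAB]

lemma KBC_tensorState {ρ : Matrix (A × B × C) (A × B × C) ℂ}
    {l : Matrix (A' × B' × C') (A' × B' × C') ℂ} (hρ : (ptBC ρ).PosDef) (hl : (ptBC l).PosDef) :
    KBC (tensorState ρ l) = tensorState (KBC ρ) 1 + tensorState 1 (KBC l) := by
  set e := Equiv.prodProdProdComm B C B' C'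
  have hneg : -reindex e e (mlog (ptBC ρ) ⊗ₖ 1 + 1 ⊗ₖ mlog (ptBC l))
      = reindex e e ((-mlog (ptBC ρ)) ⊗ₖ 1) + reindex e e (1 ⊗ₖ (-mlog (ptBC l))) := by
    ext x y
    simp [add_comm]
  rw [KBC, ptBC_tensorState, mlog_reindex _ (hρ.kronecker hl).isHermitian, mlog_kronecker hρ hl,
    hneg, embBC_add, embBC_reindex_kronecker, embBC_reindex_kronecker, embBC_one, embBC_one,
    KBC, KBC]

end Tensor

variable {A B C : Type} [Fintype A] [DecidableEq A] [Fintype B] [DecidableEq B]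
  [Fintype C] [DecidableEq C]

variable {A' B' C' : Type} [Fintype A'] [DecidableEq A'] [Fintype B'] [DecidableEq B']
  [Fintype C'] [DecidableEq C']

/-- The modular commutator is additive under tensor products: if
`ρ` is a positive definite density matrix on `H_A ⊗ H_B ⊗ H_C` and `λ` is a
positive definite density matrix on `H_{A'} ⊗ H_{B'} ⊗ H_{C'}`, then for the
state `ρ ⊗ λ` on the composite system,
`J(AA', BB', CC')_{ρ⊗λ} = J(A,B,C)_ρ + J(A',B',C')_λ`. -/
theorem modular_commutator_additive
    (ρ : Matrix (A × B × C) (A × B × C) ℂ)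
    (l : Matrix (A' × B' × C') (A' × B' × C') ℂ)
    (hρ : ρ.PosDef) (hTrρ : ρ.trace = 1)
    (hl : l.PosDef) (hTrl : l.trace = 1) :
    Jmod (tensorState ρ l) = Jmod ρ + Jmod l := by
  obtain ⟨a, -, c⟩ := nonempty_of_trace_ne_zero (hTrρ ▸ one_ne_zero : ρ.trace ≠ 0)
  obtain ⟨a', -, c'⟩ := nonempty_of_trace_ne_zero (hTrl ▸ one_ne_zero : l.trace ≠ 0)
  have : Nonempty A := ⟨a⟩
  have : Nonempty C := ⟨c⟩
  have : Nonempty A' := ⟨a'⟩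
  have : Nonempty C' := ⟨c'⟩
  rw [Jmod, KAB_tensorState (ptAB_posDef hρ) (ptAB_posDef hl),
    KBC_tensorState (ptBC_posDef hρ) (ptBC_posDef hl), commutator_tensorState_add_tensorState,
    trace_tensorState_mul_add, hTrρ, hTrl, Jmod, Jmod]
  ring

end ModularCommutator
end
end

section
/- The modular commutator is odd under bosonic time reversal: if ρ is a positive definite density matrix on H_A ⊗ H_B ⊗ H_C and ρ* denotes its entrywise complex conjugate in a fixed product basis of H_A ⊗ H_B ⊗ H_C, then J(A,B,C)_{ρ*} = −J(A,B,C)_ρ. -/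
open scoped ComplexOrder

noncomputable section

namespace ModularCommutator

open Matrix Complex

variable {A B C : Type} [Fintype A] [DecidableEq A] [Fintype B] [DecidableEq B]
  [Fintype C] [DecidableEq C]

/-- Entrywise complex conjugation as a real star-algebra homomorphism on matrices. -/
noncomputable def conjSAH (n : Type) [Fintype n] [DecidableEq n] :
    Matrix n n ℂ →⋆ₐ[ℝ] Matrix n n ℂ where
  toRingHom := (starRingEnd ℂ).mapMatrix
  commutes' := fun r => by
    ext i j
    simp [Matrix.algebraMap_matrix_apply]
    split <;> simp
  map_star' := fun M => by
    ext i j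
    simp [Matrix.star_eq_conjTranspose, Matrix.conjTranspose_apply]

lemma conjSAH_cont (n : Type) [Fintype n] [DecidableEq n] : Continuous (conjSAH n) :=
  continuous_pi fun i => continuous_pi fun j =>
    Complex.continuous_conj.comp ((continuous_apply j).comp (continuous_apply i))

lemma mlog_eq_cfc {n : Type} [Fintype n] [DecidableEq n] {M : Matrix n n ℂ}
    (hM : M.IsHermitian) : mlog M = cfc Real.log M := by
  rw [mlog, dif_pos hM, hM.cfc_eq]
  rfl

lemma mlog_isHermitian {n : Type} [Fintype n] [DecidableEq n] {M : Matrix n n ℂ}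
    (hM : M.IsHermitian) : (mlog M).IsHermitian := by
  rw [mlog_eq_cfc hM]
  exact cfc_predicate Real.log M

lemma mlog_map_conj {n : Type} [Fintype n] [DecidableEq n] {M : Matrix n n ℂ}
    (hM : M.IsHermitian) :
    mlog (M.map (starRingEnd ℂ)) = (mlog M).map (starRingEnd ℂ) := by
  have hsa : IsSelfAdjoint M := hM
  have hM' : (M.map (starRingEnd ℂ)).IsHermitian := hsa.map (conjSAH n)
  haveI : Finite (spectrum ℝ M) := M.finite_real_spectrum
  haveI : CompactSpace (spectrum ℝ M) := Finite.compactSpace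
  have hf : ContinuousOn Real.log (spectrum ℝ M) := by
    rw [continuousOn_iff_continuous_restrict]; fun_prop
  have key := StarAlgHomClass.map_cfc (S := ℝ) (conjSAH n) Real.log M hf (conjSAH_cont n) hsa hM'
  rw [mlog_eq_cfc hM, mlog_eq_cfc hM']
  exact key.symm

lemma ptAB_map_conj (ρ : Matrix (A × B × C) (A × B × C) ℂ) :
    ptAB (ρ.map (starRingEnd ℂ)) = (ptAB ρ).map (starRingEnd ℂ) := by
  ext p q
  simp [ptAB, Matrix.map_apply, map_sum]

lemma ptBC_map_conj (ρ : Matrix (A × B × C) (A × B × C) ℂ) :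
    ptBC (ρ.map (starRingEnd ℂ)) = (ptBC ρ).map (starRingEnd ℂ) := by
  ext p q
  simp [ptBC, Matrix.map_apply, map_sum]

lemma ptAB_isHermitian {ρ : Matrix (A × B × C) (A × B × C) ℂ} (hρ : ρ.IsHermitian) :
    (ptAB ρ).IsHermitian := by
  ext p q
  simp only [Matrix.conjTranspose_apply, ptAB, star_sum]
  exact Finset.sum_congr rfl fun c _ => congrFun (congrFun hρ _) _

lemma ptBC_isHermitian {ρ : Matrix (A × B × C) (A × B × C) ℂ} (hρ : ρ.IsHermitian) :
    (ptBC ρ).IsHermitian := by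
  ext p q
  simp only [Matrix.conjTranspose_apply, ptBC, star_sum]
  exact Finset.sum_congr rfl fun a _ => congrFun (congrFun hρ _) _

lemma neg_map_conj {n m : Type} (M : Matrix n m ℂ) :
    (-M).map (starRingEnd ℂ) = -(M.map (starRingEnd ℂ)) := by
  ext i j
  simp [Matrix.map_apply]

lemma embAB_map_conj (M : Matrix (A × B) (A × B) ℂ) :
    embAB (C := C) (M.map (starRingEnd ℂ)) = (embAB M).map (starRingEnd ℂ) := by
  ext x y
  simp only [embAB, Matrix.map_apply]
  split <;> simp

lemma embBC_map_conj (M : Matrix (B × C) (B × C) ℂ) :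
    embBC (A := A) (M.map (starRingEnd ℂ)) = (embBC M).map (starRingEnd ℂ) := by
  ext x y
  simp only [embBC, Matrix.map_apply]
  split <;> simp

lemma embAB_isHermitian {M : Matrix (A × B) (A × B) ℂ} (hM : M.IsHermitian) :
    (embAB (C := C) M).IsHermitian := by
  ext x y
  simp only [Matrix.conjTranspose_apply, embAB]
  by_cases h : y.2.2 = x.2.2
  · rw [if_pos h, if_pos h.symm]
    exact congrFun (congrFun hM _) _
  · rw [if_neg h, if_neg (fun hh => h hh.symm), star_zero]

lemma embBC_isHermitian {M : Matrix (B × C) (B × C) ℂ} (hM : M.IsHermitian) :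
    (embBC (A := A) M).IsHermitian := by
  ext x y
  simp only [Matrix.conjTranspose_apply, embBC]
  by_cases h : y.1 = x.1
  · rw [if_pos h, if_pos h.symm]
    exact congrFun (congrFun hM _) _
  · rw [if_neg h, if_neg (fun hh => h hh.symm), star_zero]

lemma KAB_map_conj {ρ : Matrix (A × B × C) (A × B × C) ℂ} (hρ : ρ.IsHermitian) :
    KAB (ρ.map (starRingEnd ℂ)) = (KAB ρ).map (starRingEnd ℂ) := by
  rw [KAB, KAB, ptAB_map_conj, mlog_map_conj (ptAB_isHermitian hρ),
    ← neg_map_conj, embAB_map_conj]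

lemma KBC_map_conj {ρ : Matrix (A × B × C) (A × B × C) ℂ} (hρ : ρ.IsHermitian) :
    KBC (ρ.map (starRingEnd ℂ)) = (KBC ρ).map (starRingEnd ℂ) := by
  rw [KBC, KBC, ptBC_map_conj, mlog_map_conj (ptBC_isHermitian hρ),
    ← neg_map_conj, embBC_map_conj]

lemma KAB_isHermitian {ρ : Matrix (A × B × C) (A × B × C) ℂ} (hρ : ρ.IsHermitian) :
    (KAB ρ).IsHermitian :=
  embAB_isHermitian ((mlog_isHermitian (ptAB_isHermitian hρ)).neg)

lemma KBC_isHermitian {ρ : Matrix (A × B × C) (A × B × C) ℂ} (hρ : ρ.IsHermitian) :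
    (KBC ρ).IsHermitian :=
  embBC_isHermitian ((mlog_isHermitian (ptBC_isHermitian hρ)).neg)

lemma trace_map_conj {n : Type} [Fintype n] (M : Matrix n n ℂ) :
    (M.map (starRingEnd ℂ)).trace = (starRingEnd ℂ) M.trace := by
  simp [Matrix.trace, Matrix.diag, map_sum]

/-- The modular commutator is odd under bosonic time reversal: if
`ρ` is a positive definite density matrix on `H_A ⊗ H_B ⊗ H_C` and `ρ*` denotes
its entrywise complex conjugate in the fixed product basis, then
`J(A,B,C)_{ρ*} = −J(A,B,C)_ρ`. -/
theorem modular_commutator_time_reversal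
    (ρ : Matrix (A × B × C) (A × B × C) ℂ) (hρ : ρ.PosDef) (hTr : ρ.trace = 1) :
    Jmod (ρ.map (starRingEnd ℂ)) = -Jmod ρ := by
  have hH : ρ.IsHermitian := hρ.1
  set K1 := KAB ρ with hK1
  set K2 := KBC ρ with hK2
  have h1 : (K1 : Matrix (A × B × C) (A × B × C) ℂ).IsHermitian := KAB_isHermitian hH
  have h2 : (K2 : Matrix (A × B × C) (A × B × C) ℂ).IsHermitian := KBC_isHermitian hH
  have hmul : ∀ M N : Matrix (A × B × C) (A × B × C) ℂ,
      M.map (starRingEnd ℂ) * N.map (starRingEnd ℂ) = (M * N).map (starRingEnd ℂ) := by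
    intro M N
    ext x y
    simp [Matrix.mul_apply, Matrix.map_apply, map_sum]
  set T := (ρ * (K1 * K2 - K2 * K1)).trace with hT
  have hconjT : (starRingEnd ℂ) T = -T := by
    have e1 : (starRingEnd ℂ) T = (ρ * (K1 * K2 - K2 * K1))ᴴ.trace := by
      rw [Matrix.trace_conjTranspose]; rfl
    rw [e1, Matrix.conjTranspose_mul, Matrix.conjTranspose_sub, Matrix.conjTranspose_mul,
      Matrix.conjTranspose_mul, h1.eq, h2.eq, hρ.1.eq, Matrix.trace_mul_comm, hT]
    rw [Matrix.mul_sub, Matrix.mul_sub, Matrix.trace_sub, Matrix.trace_sub]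
    ring
  have hKA : KAB (ρ.map (starRingEnd ℂ)) = K1.map (starRingEnd ℂ) := KAB_map_conj hH
  have hKB : KBC (ρ.map (starRingEnd ℂ)) = K2.map (starRingEnd ℂ) := KBC_map_conj hH
  rw [Jmod, Jmod, hKA, hKB, hmul, hmul, ← Matrix.map_sub _ (map_sub _), hmul, trace_map_conj,
    ← hT, hconjT]
  ring

end ModularCommutator
end
end

section
/- The modular commutator is invariant under local unitary conjugation: for any positive definite density matrix ρ on H_A ⊗ H_B ⊗ H_C and any unitaries U_A, U_B, U_C acting on H_A, H_B, H_C respectively, defining ρ' = (U_A ⊗ U_B ⊗ U_C) ρ (U_A† ⊗ U_B† ⊗ U_C†), one has J(A,B,C)_{ρ'} = J(A,B,C)_ρ. -/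
open scoped ComplexOrder

noncomputable section

namespace ModularCommutator

open Matrix Complex

variable {A B C : Type} [Fintype A] [DecidableEq A] [Fintype B] [DecidableEq B]
  [Fintype C] [DecidableEq C]

/-- The tensor product `U_A ⊗ U_B ⊗ U_C` of three one-site operators. -/
def tens3 (UA : Matrix A A ℂ) (UB : Matrix B B ℂ) (UC : Matrix C C ℂ) :
    Matrix (A × B × C) (A × B × C) ℂ :=
  fun x y => UA x.1 y.1 * UB x.2.1 y.2.1 * UC x.2.2 y.2.2


section Aux

variable {n : Type} [Fintype n] [DecidableEq n]

private lemma diag_comm (W : Matrix n n ℂ) (d1 d2 : n → ℝ) (f : ℝ → ℝ)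
    (h : W * Matrix.diagonal (fun i => (d1 i : ℂ)) =
      Matrix.diagonal (fun i => (d2 i : ℂ)) * W) :
    W * Matrix.diagonal (fun i => (f (d1 i) : ℂ)) =
      Matrix.diagonal (fun i => (f (d2 i) : ℂ)) * W := by
  ext i j
  have h' := congrFun (congrFun h i) j
  simp only [Matrix.mul_diagonal, Matrix.diagonal_mul] at h' ⊢
  rcases eq_or_ne (W i j) 0 with hz | hz
  · rw [hz, zero_mul, mul_zero]
  · have hc : (d1 j : ℂ) = (d2 i : ℂ) :=
      mul_left_cancel₀ hz (by rw [h']; ring)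
    have : d1 j = d2 i := by exact_mod_cast hc
    rw [this, mul_comm]

private lemma fun_conj_eq (U1 U2 : Matrix n n ℂ) (hU1 : U1 ∈ Matrix.unitaryGroup n ℂ)
    (hU2 : U2 ∈ Matrix.unitaryGroup n ℂ) (d1 d2 : n → ℝ) (f : ℝ → ℝ)
    (h : U1 * Matrix.diagonal (fun i => (d1 i : ℂ)) * star U1 =
      U2 * Matrix.diagonal (fun i => (d2 i : ℂ)) * star U2) :
    U1 * Matrix.diagonal (fun i => (f (d1 i) : ℂ)) * star U1 =
      U2 * Matrix.diagonal (fun i => (f (d2 i) : ℂ)) * star U2 := by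
  have h1 : star U1 * U1 = 1 := Matrix.mem_unitaryGroup_iff'.mp hU1
  have h1' : U1 * star U1 = 1 := Matrix.mem_unitaryGroup_iff.mp hU1
  have h2 : star U2 * U2 = 1 := Matrix.mem_unitaryGroup_iff'.mp hU2
  have h2' : U2 * star U2 = 1 := Matrix.mem_unitaryGroup_iff.mp hU2
  set W := star U2 * U1 with hW
  have hcomm : W * Matrix.diagonal (fun i => (d1 i : ℂ)) =
      Matrix.diagonal (fun i => (d2 i : ℂ)) * W := by
    have h3 := congrArg (fun X => star U2 * X * U1) h
    simp only [Matrix.mul_assoc] at h3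
    rw [h1, Matrix.mul_one, ← Matrix.mul_assoc (star U2) U2, h2, Matrix.one_mul] at h3
    simpa [hW, Matrix.mul_assoc] using h3
  have hf := diag_comm W d1 d2 f hcomm
  calc U1 * Matrix.diagonal (fun i => (f (d1 i) : ℂ)) * star U1
      = U2 * (W * Matrix.diagonal (fun i => (f (d1 i) : ℂ))) * star U1 := by
        rw [hW]; rw [show U2 * (star U2 * U1 * Matrix.diagonal (fun i => (f (d1 i) : ℂ)))
          = (U2 * star U2) * U1 * Matrix.diagonal (fun i => (f (d1 i) : ℂ)) by
            simp [Matrix.mul_assoc]]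
        simp [h2']
    _ = U2 * (Matrix.diagonal (fun i => (f (d2 i) : ℂ)) * W) * star U1 := by rw [hf]
    _ = U2 * Matrix.diagonal (fun i => (f (d2 i) : ℂ)) * star U2 := by
        rw [hW]
        simp only [Matrix.mul_assoc, h1']
        simp [Matrix.mul_assoc]

private lemma mlog_conj (M : Matrix n n ℂ) (hM : M.IsHermitian) (V : Matrix n n ℂ)
    (hV : V ∈ Matrix.unitaryGroup n ℂ) :
    mlog (V * M * star V) = V * mlog M * star V := by
  have hM2 : (V * M * star V).IsHermitian := by
    rw [Matrix.star_eq_conjTranspose]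
    exact Matrix.isHermitian_mul_mul_conjTranspose V hM
  rw [mlog, mlog, dif_pos hM2, dif_pos hM]
  set E1 : Matrix n n ℂ := (hM.eigenvectorUnitary : Matrix n n ℂ) with hE1
  set U2 : Matrix n n ℂ := (hM2.eigenvectorUnitary : Matrix n n ℂ) with hU2
  have hU1mem : V * E1 ∈ Matrix.unitaryGroup n ℂ := mul_mem hV hM.eigenvectorUnitary.2
  have hs1 : M = E1 * Matrix.diagonal (fun i => (hM.eigenvalues i : ℂ)) * star E1 :=
    hM.spectral_theorem
  have hs2 : V * M * star V
      = U2 * Matrix.diagonal (fun i => (hM2.eigenvalues i : ℂ)) * star U2 :=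
    hM2.spectral_theorem
  have hkey : (V * E1) * Matrix.diagonal (fun i => (hM.eigenvalues i : ℂ)) * star (V * E1)
      = U2 * Matrix.diagonal (fun i => (hM2.eigenvalues i : ℂ)) * star U2 := by
    rw [← hs2]
    conv_rhs => rw [hs1]
    simp only [Matrix.star_mul, Matrix.mul_assoc]
  have hthis := fun_conj_eq (V * E1) U2 hU1mem hM2.eigenvectorUnitary.2
    hM.eigenvalues hM2.eigenvalues Real.log hkey
  rw [← hthis]
  simp only [Matrix.star_mul, Matrix.mul_assoc]

end Aux

section Aux2

variable {A B C : Type} [Fintype A] [DecidableEq A] [Fintype B] [DecidableEq B]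
  [Fintype C] [DecidableEq C]

/-- Tensor product of two one-site operators on `A ⊗ B`. -/
private def t2AB (UA : Matrix A A ℂ) (UB : Matrix B B ℂ) : Matrix (A × B) (A × B) ℂ :=
  fun x y => UA x.1 y.1 * UB x.2 y.2

/-- Tensor product of two one-site operators on `B ⊗ C`. -/
private def t2BC (UB : Matrix B B ℂ) (UC : Matrix C C ℂ) : Matrix (B × C) (B × C) ℂ :=
  fun x y => UB x.1 y.1 * UC x.2 y.2

private lemma unit_delta {n : Type} [Fintype n] [DecidableEq n] {U : Matrix n n ℂ}
    (hU : U ∈ Matrix.unitaryGroup n ℂ) (x y : n) :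
    ∑ c, star (U c x) * U c y = if x = y then 1 else 0 := by
  have h := Matrix.mem_unitaryGroup_iff'.mp hU
  have := congrFun (congrFun h x) y
  simpa [Matrix.mul_apply, Matrix.star_apply, Matrix.one_apply] using this

private lemma unit_delta' {n : Type} [Fintype n] [DecidableEq n] {U : Matrix n n ℂ}
    (hU : U ∈ Matrix.unitaryGroup n ℂ) (x y : n) :
    ∑ c, U x c * star (U y c) = if x = y then 1 else 0 := by
  have h := Matrix.mem_unitaryGroup_iff.mp hU
  have := congrFun (congrFun h x) y
  simpa [Matrix.mul_apply, Matrix.star_apply, Matrix.one_apply] using this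

private lemma t2AB_mem {UA : Matrix A A ℂ} {UB : Matrix B B ℂ}
    (hUA : UA ∈ Matrix.unitaryGroup A ℂ) (hUB : UB ∈ Matrix.unitaryGroup B ℂ) :
    t2AB UA UB ∈ Matrix.unitaryGroup (A × B) ℂ := by
  rw [Matrix.mem_unitaryGroup_iff']
  ext ⟨x1, x2⟩ ⟨y1, y2⟩
  simp only [Matrix.mul_apply, Matrix.star_apply, t2AB, Fintype.sum_prod_type]
  have : ∀ a : A, ∀ b : B, star (UA a x1 * UB b x2) * (UA a y1 * UB b y2)
      = (star (UA a x1) * UA a y1) * (star (UB b x2) * UB b y2) := by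
    intro a b; simp [star_mul']; ring
  simp_rw [this, ← Finset.mul_sum, ← Finset.sum_mul, unit_delta hUA, unit_delta hUB]
  by_cases h1 : x1 = y1 <;> by_cases h2 : x2 = y2 <;>
    simp [Matrix.one_apply, Prod.ext_iff, h1, h2]

private lemma t2BC_mem {UB : Matrix B B ℂ} {UC : Matrix C C ℂ}
    (hUB : UB ∈ Matrix.unitaryGroup B ℂ) (hUC : UC ∈ Matrix.unitaryGroup C ℂ) :
    t2BC UB UC ∈ Matrix.unitaryGroup (B × C) ℂ := by
  rw [Matrix.mem_unitaryGroup_iff']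
  ext ⟨x1, x2⟩ ⟨y1, y2⟩
  simp only [Matrix.mul_apply, Matrix.star_apply, t2BC, Fintype.sum_prod_type]
  have : ∀ a : B, ∀ b : C, star (UB a x1 * UC b x2) * (UB a y1 * UC b y2)
      = (star (UB a x1) * UB a y1) * (star (UC b x2) * UC b y2) := by
    intro a b; simp [star_mul']; ring
  simp_rw [this, ← Finset.mul_sum, ← Finset.sum_mul, unit_delta hUB, unit_delta hUC]
  by_cases h1 : x1 = y1 <;> by_cases h2 : x2 = y2 <;>
    simp [Matrix.one_apply, Prod.ext_iff, h1, h2]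

private lemma tens3_mem {UA : Matrix A A ℂ} {UB : Matrix B B ℂ} {UC : Matrix C C ℂ}
    (hUA : UA ∈ Matrix.unitaryGroup A ℂ) (hUB : UB ∈ Matrix.unitaryGroup B ℂ)
    (hUC : UC ∈ Matrix.unitaryGroup C ℂ) :
    tens3 UA UB UC ∈ Matrix.unitaryGroup (A × B × C) ℂ := by
  rw [Matrix.mem_unitaryGroup_iff']
  ext ⟨x1, x2, x3⟩ ⟨y1, y2, y3⟩
  simp only [Matrix.mul_apply, Matrix.star_apply, tens3, Fintype.sum_prod_type]
  have : ∀ (a : A) (b : B) (c : C),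
      star (UA a x1 * UB b x2 * UC c x3) * (UA a y1 * UB b y2 * UC c y3)
      = (star (UA a x1) * UA a y1) * ((star (UB b x2) * UB b y2)
          * (star (UC c x3) * UC c y3)) := by
    intro a b c; simp [star_mul']; ring
  simp_rw [this, ← Finset.mul_sum, ← Finset.sum_mul, unit_delta hUA, unit_delta hUB,
    unit_delta hUC]
  by_cases h1 : x1 = y1 <;> by_cases h2 : x2 = y2 <;> by_cases h3 : x3 = y3 <;>
    simp [Matrix.one_apply, Prod.ext_iff, h1, h2, h3]

private lemma embAB_mul (X Y : Matrix (A × B) (A × B) ℂ) :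
    embAB (A := A) (B := B) (C := C) (X * Y) = embAB X * embAB Y := by
  ext ⟨x1, x2, x3⟩ ⟨y1, y2, y3⟩
  simp only [embAB, Matrix.mul_apply, Fintype.sum_prod_type]
  simp [ite_mul, mul_ite, Finset.sum_ite_eq, Finset.sum_ite_eq']

private lemma embBC_mul (X Y : Matrix (B × C) (B × C) ℂ) :
    embBC (A := A) (X * Y) = embBC X * embBC Y := by
  ext ⟨x1, x2⟩ ⟨y1, y2⟩
  simp only [embBC, Matrix.mul_apply, Fintype.sum_prod_type]
  simp [ite_mul, mul_ite, Finset.sum_ite_eq, Finset.sum_ite_eq']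

private lemma embAB_star (X : Matrix (A × B) (A × B) ℂ) :
    embAB (A := A) (B := B) (C := C) (star X) = star (embAB X) := by
  ext ⟨x1, x2, x3⟩ ⟨y1, y2, y3⟩
  simp only [embAB, Matrix.star_apply]
  by_cases h : x3 = y3 <;> simp [h, eq_comm]

private lemma embBC_star (X : Matrix (B × C) (B × C) ℂ) :
    embBC (A := A) (star X) = star (embBC X) := by
  ext ⟨x1, x2⟩ ⟨y1, y2⟩
  simp only [embBC, Matrix.star_apply]
  by_cases h : x1 = y1 <;> simp [h, eq_comm]

private lemma tens3_decompAB (UA : Matrix A A ℂ) (UB : Matrix B B ℂ) (UC : Matrix C C ℂ) :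
    tens3 UA UB UC = embAB (t2AB UA UB) * tens3 1 1 UC := by
  ext ⟨x1, x2, x3⟩ ⟨y1, y2, y3⟩
  simp only [tens3, embAB, t2AB, Matrix.mul_apply, Fintype.sum_prod_type, Matrix.one_apply]
  simp [ite_mul, mul_ite, Finset.sum_ite_eq, Finset.sum_ite_eq']

private lemma tens3_decompBC (UA : Matrix A A ℂ) (UB : Matrix B B ℂ) (UC : Matrix C C ℂ) :
    tens3 UA UB UC = embBC (t2BC UB UC) * tens3 UA 1 1 := by
  ext ⟨x1, x2, x3⟩ ⟨y1, y2, y3⟩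
  simp only [tens3, embBC, t2BC, Matrix.mul_apply, Fintype.sum_prod_type, Matrix.one_apply]
  simp [ite_mul, mul_ite, Finset.sum_ite_eq, Finset.sum_ite_eq']
  ring

private lemma ptAB_embAB_mul (N : Matrix (A × B) (A × B) ℂ)
    (M : Matrix (A × B × C) (A × B × C) ℂ) :
    ptAB (embAB N * M) = N * ptAB M := by
  ext ⟨p1, p2⟩ ⟨q1, q2⟩
  simp only [ptAB, embAB, Matrix.mul_apply, Fintype.sum_prod_type]
  rw [Finset.sum_comm]
  refine Finset.sum_congr rfl fun a _ => ?_
  rw [Finset.sum_comm]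
  refine Finset.sum_congr rfl fun b _ => ?_
  simp [ite_mul, Finset.mul_sum, Finset.sum_ite_eq, Finset.sum_ite_eq']

private lemma ptAB_mul_embAB (N : Matrix (A × B) (A × B) ℂ)
    (M : Matrix (A × B × C) (A × B × C) ℂ) :
    ptAB (M * embAB N) = ptAB M * N := by
  ext ⟨p1, p2⟩ ⟨q1, q2⟩
  simp only [ptAB, embAB, Matrix.mul_apply, Fintype.sum_prod_type]
  rw [Finset.sum_comm]
  refine Finset.sum_congr rfl fun a _ => ?_
  rw [Finset.sum_comm]
  refine Finset.sum_congr rfl fun b _ => ?_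
  simp [mul_ite, Finset.mul_sum, Finset.sum_ite_eq, Finset.sum_ite_eq', Finset.sum_mul]

private lemma ptBC_embBC_mul (N : Matrix (B × C) (B × C) ℂ)
    (M : Matrix (A × B × C) (A × B × C) ℂ) :
    ptBC (embBC N * M) = N * ptBC M := by
  ext ⟨p1, p2⟩ ⟨q1, q2⟩
  simp only [ptBC, embBC, Matrix.mul_apply, Fintype.sum_prod_type, ite_mul, zero_mul,
    Finset.sum_ite_irrel, Finset.sum_ite_eq, Finset.sum_ite_eq', Finset.sum_const_zero,
    Finset.mem_univ, if_true, Finset.mul_sum]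
  exact Eq.trans Finset.sum_comm
    (Finset.sum_congr rfl fun b _ => Finset.sum_comm)

private lemma ptBC_mul_embBC (N : Matrix (B × C) (B × C) ℂ)
    (M : Matrix (A × B × C) (A × B × C) ℂ) :
    ptBC (M * embBC N) = ptBC M * N := by
  ext ⟨p1, p2⟩ ⟨q1, q2⟩
  simp only [ptBC, embBC, Matrix.mul_apply, Fintype.sum_prod_type, mul_ite, mul_zero,
    Finset.sum_ite_irrel, Finset.sum_ite_eq, Finset.sum_ite_eq', Finset.sum_const_zero,
    Finset.mem_univ, if_true, Finset.sum_mul]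
  exact Eq.trans Finset.sum_comm
    (Finset.sum_congr rfl fun b _ => Finset.sum_comm)

private lemma ptAB_conjC {UC : Matrix C C ℂ} (hUC : UC ∈ Matrix.unitaryGroup C ℂ)
    (ρ : Matrix (A × B × C) (A × B × C) ℂ) :
    ptAB (tens3 1 1 UC * ρ * star (tens3 1 1 UC)) = ptAB ρ := by
  ext ⟨p1, p2⟩ ⟨q1, q2⟩
  simp only [ptAB, tens3, Matrix.mul_apply, Matrix.star_apply, Fintype.sum_prod_type,
    Matrix.one_apply, ite_mul, mul_ite, zero_mul, mul_zero, one_mul, mul_one, star_mul',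
    star_one, star_zero, apply_ite (star : ℂ → ℂ), Finset.sum_ite_irrel, Finset.sum_ite_eq,
    Finset.sum_ite_eq', Finset.sum_const_zero, Finset.mem_univ, if_true, Finset.sum_mul]
  rw [Finset.sum_comm]
  refine Finset.sum_congr rfl fun v3 _ => ?_
  rw [Finset.sum_comm]
  have key : ∀ u3 : C, ∑ x : C, UC x u3 * ρ (p1, p2, u3) (q1, q2, v3) * star (UC x v3)
      = (if v3 = u3 then 1 else 0) * ρ (p1, p2, u3) (q1, q2, v3) := by
    intro u3
    rw [← unit_delta hUC v3 u3, Finset.sum_mul]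
    exact Finset.sum_congr rfl fun x _ => by ring
  simp_rw [key]
  simp [ite_mul, Finset.sum_ite_eq]

private lemma ptBC_conjA {UA : Matrix A A ℂ} (hUA : UA ∈ Matrix.unitaryGroup A ℂ)
    (ρ : Matrix (A × B × C) (A × B × C) ℂ) :
    ptBC (tens3 UA 1 1 * ρ * star (tens3 UA 1 1)) = ptBC ρ := by
  ext ⟨p1, p2⟩ ⟨q1, q2⟩
  simp only [ptBC, tens3, Matrix.mul_apply, Matrix.star_apply, Fintype.sum_prod_type,
    Matrix.one_apply, ite_mul, mul_ite, zero_mul, mul_zero, one_mul, mul_one, star_mul',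
    star_one, star_zero, apply_ite (star : ℂ → ℂ), Finset.sum_ite_irrel, Finset.sum_ite_eq,
    Finset.sum_ite_eq', Finset.sum_const_zero, Finset.mem_univ, if_true, Finset.sum_mul]
  rw [Finset.sum_comm]
  refine Finset.sum_congr rfl fun v1 _ => ?_
  rw [Finset.sum_comm]
  have key : ∀ u1 : A, ∑ x : A, UA x u1 * ρ (u1, p1, p2) (v1, q1, q2) * star (UA x v1)
      = (if v1 = u1 then 1 else 0) * ρ (u1, p1, p2) (v1, q1, q2) := by
    intro u1
    rw [← unit_delta hUA v1 u1, Finset.sum_mul]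
    exact Finset.sum_congr rfl fun x _ => by ring
  simp_rw [key]
  simp [ite_mul, Finset.sum_ite_eq]

private lemma comm_embAB (N : Matrix (A × B) (A × B) ℂ) (UC : Matrix C C ℂ) :
    tens3 (1 : Matrix A A ℂ) (1 : Matrix B B ℂ) UC * embAB N
      = embAB N * tens3 1 1 UC := by
  ext ⟨x1, x2, x3⟩ ⟨y1, y2, y3⟩
  simp only [tens3, embAB, Matrix.mul_apply, Fintype.sum_prod_type, Matrix.one_apply]
  simp [ite_mul, mul_ite, Finset.sum_ite_eq, Finset.sum_ite_eq']
  ring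

private lemma comm_embBC (N : Matrix (B × C) (B × C) ℂ) (UA : Matrix A A ℂ) :
    tens3 UA (1 : Matrix B B ℂ) (1 : Matrix C C ℂ) * embBC N
      = embBC N * tens3 UA 1 1 := by
  ext ⟨x1, x2, x3⟩ ⟨y1, y2, y3⟩
  simp only [tens3, embBC, Matrix.mul_apply, Fintype.sum_prod_type, Matrix.one_apply]
  simp [ite_mul, mul_ite, Finset.sum_ite_eq, Finset.sum_ite_eq']
  ring

private lemma ptAB_herm {ρ : Matrix (A × B × C) (A × B × C) ℂ} (h : ρ.IsHermitian) :
    (ptAB ρ).IsHermitian := by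
  apply Matrix.IsHermitian.ext
  intro i j
  simp only [ptAB, star_sum]
  exact Finset.sum_congr rfl fun c _ => h.apply _ _

private lemma ptBC_herm {ρ : Matrix (A × B × C) (A × B × C) ℂ} (h : ρ.IsHermitian) :
    (ptBC ρ).IsHermitian := by
  apply Matrix.IsHermitian.ext
  intro i j
  simp only [ptBC, star_sum]
  exact Finset.sum_congr rfl fun c _ => h.apply _ _

end Aux2

/-- The modular commutator is invariant under local unitary
conjugation: for any positive definite density matrix `ρ` on `H_A ⊗ H_B ⊗ H_C`
and unitaries `U_A, U_B, U_C` on the three factors, setting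
`ρ' = (U_A ⊗ U_B ⊗ U_C) ρ (U_A† ⊗ U_B† ⊗ U_C†)` one has
`J(A,B,C)_{ρ'} = J(A,B,C)_ρ`. -/
theorem modular_commutator_local_unitary_invariance
    (ρ : Matrix (A × B × C) (A × B × C) ℂ) (hρ : ρ.PosDef) (hTr : ρ.trace = 1)
    (UA : Matrix A A ℂ) (UB : Matrix B B ℂ) (UC : Matrix C C ℂ)
    (hUA : UA ∈ Matrix.unitaryGroup A ℂ) (hUB : UB ∈ Matrix.unitaryGroup B ℂ)
    (hUC : UC ∈ Matrix.unitaryGroup C ℂ) :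
    Jmod (tens3 UA UB UC * ρ * star (tens3 UA UB UC)) = Jmod ρ := by
  set W := tens3 UA UB UC with hWdef
  have hρH : ρ.IsHermitian := hρ.1
  have hWmem : W ∈ Matrix.unitaryGroup (A × B × C) ℂ := tens3_mem hUA hUB hUC
  have hWW : star W * W = 1 := Matrix.mem_unitaryGroup_iff'.mp hWmem
  have hWW' : W * star W = 1 := Matrix.mem_unitaryGroup_iff.mp hWmem
  set T2 : Matrix (A × B) (A × B) ℂ := t2AB UA UB with hT2
  set T2' : Matrix (B × C) (B × C) ℂ := t2BC UB UC with hT2'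
  set GC : Matrix (A × B × C) (A × B × C) ℂ := tens3 1 1 UC with hGC
  set GA : Matrix (A × B × C) (A × B × C) ℂ := tens3 UA 1 1 with hGA
  have hGCmem : GC ∈ Matrix.unitaryGroup (A × B × C) ℂ :=
    tens3_mem (one_mem _) (one_mem _) hUC
  have hGAmem : GA ∈ Matrix.unitaryGroup (A × B × C) ℂ :=
    tens3_mem hUA (one_mem _) (one_mem _)
  have hGC' : GC * star GC = 1 := Matrix.mem_unitaryGroup_iff.mp hGCmem
  have hGA' : GA * star GA = 1 := Matrix.mem_unitaryGroup_iff.mp hGAmem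
  have hdecAB : W = embAB T2 * GC := tens3_decompAB UA UB UC
  have hdecBC : W = embBC T2' * GA := tens3_decompBC UA UB UC
  -- conjugated partial traces
  have hsplitAB : W * ρ * star W = embAB T2 * (GC * ρ * star GC) * star (embAB T2) := by
    rw [hdecAB, Matrix.star_mul]
    simp only [Matrix.mul_assoc]
  have hsplitBC : W * ρ * star W = embBC T2' * (GA * ρ * star GA) * star (embBC T2') := by
    rw [hdecBC, Matrix.star_mul]
    simp only [Matrix.mul_assoc]
  have hptAB : ptAB (W * ρ * star W) = T2 * ptAB ρ * star T2 := by
    rw [hsplitAB, ← embAB_star, Matrix.mul_assoc, ptAB_embAB_mul, ptAB_mul_embAB,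
      ptAB_conjC hUC, Matrix.mul_assoc]
  have hptBC : ptBC (W * ρ * star W) = T2' * ptBC ρ * star T2' := by
    rw [hsplitBC, ← embBC_star, Matrix.mul_assoc, ptBC_embBC_mul, ptBC_mul_embBC,
      ptBC_conjA hUA, Matrix.mul_assoc]
  -- conjugated modular Hamiltonians
  have hKAB : KAB (W * ρ * star W) = W * KAB ρ * star W := by
    rw [KAB, hptAB, mlog_conj (ptAB ρ) (ptAB_herm hρH) T2 (t2AB_mem hUA hUB)]
    have hneg : -(T2 * mlog (ptAB ρ) * star T2) = T2 * (-(mlog (ptAB ρ))) * star T2 := by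
      rw [Matrix.mul_neg, Matrix.neg_mul]
    rw [hneg, embAB_mul, embAB_mul, embAB_star, KAB]
    rw [hdecAB, Matrix.star_mul]
    have hc := comm_embAB (-(mlog (ptAB ρ))) UC
    rw [← hGC] at hc
    calc embAB T2 * embAB (-(mlog (ptAB ρ))) * star (embAB T2)
        = embAB T2 * (embAB (-(mlog (ptAB ρ))) * (GC * star GC)) * star (embAB T2) := by
          rw [hGC', Matrix.mul_one]
      _ = embAB T2 * GC * embAB (-(mlog (ptAB ρ))) * (star GC * star (embAB T2)) := by
          simp only [Matrix.mul_assoc]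
          rw [← Matrix.mul_assoc (embAB (-(mlog (ptAB ρ)))) GC
            (star GC * star (embAB T2)), ← hc, Matrix.mul_assoc]
  have hKBC : KBC (W * ρ * star W) = W * KBC ρ * star W := by
    rw [KBC, hptBC, mlog_conj (ptBC ρ) (ptBC_herm hρH) T2' (t2BC_mem hUB hUC)]
    have hneg : -(T2' * mlog (ptBC ρ) * star T2') = T2' * (-(mlog (ptBC ρ))) * star T2' := by
      rw [Matrix.mul_neg, Matrix.neg_mul]
    rw [hneg, embBC_mul, embBC_mul, embBC_star, KBC]
    rw [hdecBC, Matrix.star_mul]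
    have hc := comm_embBC (-(mlog (ptBC ρ))) UA
    rw [← hGA] at hc
    calc embBC T2' * embBC (-(mlog (ptBC ρ))) * star (embBC T2')
        = embBC T2' * (embBC (-(mlog (ptBC ρ))) * (GA * star GA)) * star (embBC T2') := by
          rw [hGA', Matrix.mul_one]
      _ = embBC T2' * GA * embBC (-(mlog (ptBC ρ))) * (star GA * star (embBC T2')) := by
          simp only [Matrix.mul_assoc]
          rw [← Matrix.mul_assoc (embBC (-(mlog (ptBC ρ)))) GA
            (star GA * star (embBC T2')), ← hc, Matrix.mul_assoc]
  -- conclude by trace cyclicity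
  have conj_mul : ∀ X Y : Matrix (A × B × C) (A × B × C) ℂ,
      (W * X * star W) * (W * Y * star W) = W * (X * Y) * star W := by
    intro X Y
    calc (W * X * star W) * (W * Y * star W)
        = W * (X * ((star W * W) * (Y * star W))) := by simp only [Matrix.mul_assoc]
      _ = W * (X * Y) * star W := by rw [hWW, Matrix.one_mul]; simp only [Matrix.mul_assoc]
  rw [Jmod, Jmod, hKAB, hKBC, conj_mul, conj_mul,
    show W * (KAB ρ * KBC ρ) * star W - W * (KBC ρ * KAB ρ) * star W
      = W * (KAB ρ * KBC ρ - KBC ρ * KAB ρ) * star W by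
        rw [Matrix.mul_sub, Matrix.sub_mul],
    conj_mul, Matrix.trace_mul_cycle, ← Matrix.mul_assoc, hWW, Matrix.one_mul]

end ModularCommutator
end
end
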